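/- Let X ≥ ℓ where ℓ = deg α, and for h = a + b√α ∈ K define Σ(X,h) = Σ_{x ∈ 𝔸, deg(Norm x) ≤ X} e(Tr(h·x/(2√α))). Then |Σ(X,h)| ≤ q^{X+2} if N_T(h) ≤ q^{ℓ−X−1}, and Σ(X,h) = 0 otherwise, where N_T(h) = (inf_{h'∼h}|h'|_∞)² is the squared torus distance of h in K_∞/𝔸. -/

import Mathlib

open Polynomial MeasureTheory

/-- Embedding of `F_q[t]` into `k_∞ = F_q((1/t))`, sending `t` to the inverse of the
Laurent-series variable. -/
noncomputable def polyL {Fq : Type*} [Field Fq] : Polynomial Fq →ₐ[Fq] LaurentSeries Fq :=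
  Polynomial.aeval (HahnSeries.single (-1 : ℤ) (1 : Fq))

open Classical in
/-- The absolute value at infinity on `k_∞`, with `|f|_∞ = q^(deg f)` for polynomials. -/
noncomputable def absInfty {Fq : Type*} [Field Fq] [Fintype Fq] (f : LaurentSeries Fq) : ℝ :=
  if f = 0 then 0 else (Fintype.card Fq : ℝ) ^ (-(f.order))

/-- The standard additive character `e` of `k_∞`: `e(∑ aᵢ tⁱ) = exp(2πi·Tr(a₋₁)/p)`. -/
noncomputable def eChar (p : ℕ) [Fact p.Prime] {Fq : Type*} [Field Fq] [Fintype Fq]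
    [Algebra (ZMod p) Fq] (f : LaurentSeries Fq) : ℂ :=
  Complex.exp (2 * Real.pi * Complex.I * (((Algebra.trace (ZMod p) Fq (f.coeff 1)).val : ℂ) / p))

/-- Embedding of `k = F_q(t)` into `k_∞`. -/
noncomputable def ratL {Fq : Type*} [Field Fq] (r : RatFunc Fq) : LaurentSeries Fq :=
  polyL r.num / polyL r.denom

/-! ### Auxiliary lemmas -/

section EChar
variable (p : ℕ) [Fact p.Prime] {Fq : Type*} [Field Fq] [Fintype Fq] [Algebra (ZMod p) Fq]

lemma zmod_exp_add (z w : ZMod p) :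
    Complex.exp (2*Real.pi*Complex.I*(((z+w).val : ℂ)/p)) =
    Complex.exp (2*Real.pi*Complex.I*((z.val : ℂ)/p)) *
    Complex.exp (2*Real.pi*Complex.I*((w.val:ℂ)/p)) := by
  rw [← Complex.exp_add]
  have hp : (p:ℂ) ≠ 0 := by exact_mod_cast (Nat.Prime.pos Fact.out).ne'
  set k : ℕ := (z.val + w.val)/p with hk
  have hnat : (z+w).val + p * k = z.val + w.val := by
    rw [ZMod.val_add]; exact Nat.mod_add_div _ _
  have h : ((z.val:ℂ) + w.val) = ((z+w).val : ℂ) + p * k := by exact_mod_cast hnat.symm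
  have h' : ((z.val:ℂ))/p + (w.val:ℂ)/p = ((z+w).val:ℂ)/p + k := by
    rw [← add_div, h, add_div, mul_comm, mul_div_assoc, div_self hp, mul_one]
  have key : 2*(Real.pi:ℂ)*Complex.I*(((z+w).val : ℂ)/p) =
      2*Real.pi*Complex.I*((z.val:ℂ)/p) + 2*Real.pi*Complex.I*((w.val:ℂ)/p)
        - (k:ℂ)*(2*Real.pi*Complex.I) := by
    linear_combination (-2*(Real.pi:ℂ)*Complex.I) * h'
  rw [key, Complex.exp_sub]
  have hk1 : Complex.exp ((k:ℂ) * (2*Real.pi*Complex.I)) = 1 := by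
    have := Complex.exp_int_mul_two_pi_mul_I (k : ℤ)
    push_cast at this
    exact this
  rw [hk1, div_one]

lemma eChar_add (f g : LaurentSeries Fq) : eChar p (f+g) = eChar p f * eChar p g := by
  unfold eChar
  rw [HahnSeries.coeff_add, map_add]
  exact zmod_exp_add p _ _

lemma norm_eChar (f : LaurentSeries Fq) : ‖eChar p f‖ = 1 := by
  unfold eChar
  set v := (Algebra.trace (ZMod p) Fq (f.coeff 1)).val
  have : 2*(Real.pi:ℂ)*Complex.I*((v:ℂ)/p) = ((2*Real.pi*v/p : ℝ) : ℂ) * Complex.I := by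
    push_cast; ring
  rw [this, Complex.norm_exp_ofReal_mul_I]

lemma eChar_ne_one (f : LaurentSeries Fq)
    (hf : Algebra.trace (ZMod p) Fq (f.coeff 1) ≠ 0) : eChar p f ≠ 1 := by
  unfold eChar
  intro h
  rw [Complex.exp_eq_one_iff] at h
  obtain ⟨n, hn⟩ := h
  have hp0 : (0:ℤ) < p := by exact_mod_cast (Fact.out : p.Prime).pos
  have hpi : (2*(Real.pi:ℂ)*Complex.I) ≠ 0 := by
    simp [Real.pi_ne_zero, Complex.I_ne_zero]
  set v := (Algebra.trace (ZMod p) Fq (f.coeff 1)).val with hv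
  have hdiv : ((v:ℂ)/p) = n := by
    apply mul_left_cancel₀ hpi
    rw [hn]; ring
  have hpC : (p:ℂ) ≠ 0 := by exact_mod_cast hp0.ne'
  have hC : (v:ℂ) = n * p := by
    rw [div_eq_iff hpC] at hdiv; exact_mod_cast hdiv
  have hZ : (v:ℤ) = n * p := by exact_mod_cast hC
  have hvlt : (v:ℤ) < p := by exact_mod_cast ZMod.val_lt _
  have hv0 : (0:ℤ) ≤ v := by positivity
  have hn0 : n = 0 := by
    by_contra hne
    rcases lt_or_gt_of_ne hne with hlt|hgt
    · nlinarith
    · nlinarith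
  rw [hn0] at hZ
  simp at hZ
  exact hf (by rwa [← ZMod.val_eq_zero])

end EChar

section PolyL
variable {Fq : Type*} [Field Fq]

lemma polyL_monomial (n : ℕ) (c : Fq) :
    polyL (monomial n c) = HahnSeries.single (-(n:ℤ)) c := by
  unfold polyL
  rw [Polynomial.aeval_monomial, HahnSeries.single_pow]
  have h2 : algebraMap Fq (LaurentSeries Fq) c = HahnSeries.single (0:ℤ) c := by
    rw [HahnSeries.algebraMap_apply', ← PowerSeries.C_eq_algebraMap, HahnSeries.ofPowerSeries_C,
      HahnSeries.C_apply]
  rw [h2, HahnSeries.single_mul_single]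
  simp

lemma polyL_coeff (u : Polynomial Fq) (j : ℕ) :
    (polyL u : LaurentSeries Fq).coeff (-(j:ℤ)) = u.coeff j := by
  induction u using Polynomial.induction_on' with
  | add f g hf hg => rw [map_add, HahnSeries.coeff_add, hf, hg, Polynomial.coeff_add]
  | monomial n c =>
    rw [polyL_monomial, HahnSeries.coeff_single, Polynomial.coeff_monomial]
    by_cases h : j = n
    · simp [h]
    · have h1 : -(j:ℤ) ≠ -(n:ℤ) := by omega
      simp [h1, h, Ne.symm h]

lemma polyL_coeff_pos (u : Polynomial Fq) (k : ℤ) (hk : 0 < k) :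
    (polyL u : LaurentSeries Fq).coeff k = 0 := by
  induction u using Polynomial.induction_on' with
  | add f g hf hg => rw [map_add, HahnSeries.coeff_add, hf, hg, add_zero]
  | monomial n c =>
    rw [polyL_monomial, HahnSeries.coeff_single]
    have : k ≠ -(n:ℤ) := by omega
    simp [this]

lemma mul_polyL_monomial_coeff_one (f : LaurentSeries Fq) (j : ℕ) (c : Fq) :
    (f * polyL (C c * X^j)).coeff 1 = f.coeff (1+j) * c := by
  have h : (C c * X^j : Polynomial Fq) = monomial j c := by
    rw [Polynomial.C_mul_X_pow_eq_monomial]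
  rw [h, polyL_monomial]
  have := HahnSeries.coeff_mul_single_add (r := c) (x := f) (a := (1+j:ℤ)) (b := (-(j:ℤ)))
  simpa using this

noncomputable def fracPoly (f : LaurentSeries Fq) : Polynomial Fq :=
  ∑ j ∈ Finset.range ((max 0 (-f.order)).toNat + 1), monomial j (f.coeff (-(j:ℤ)))

lemma fracPoly_coeff (f : LaurentSeries Fq) (j : ℕ) :
    (fracPoly f).coeff j =
      if j < (max 0 (-f.order)).toNat + 1 then f.coeff (-(j:ℤ)) else 0 := by
  unfold fracPoly
  rw [Polynomial.finset_sum_coeff]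
  simp only [Polynomial.coeff_monomial]
  rw [Finset.sum_ite_eq' (Finset.range _) j (fun j' => f.coeff (-(j':ℤ)))]
  simp [Finset.mem_range]

lemma polyL_fracPoly_coeff (f : LaurentSeries Fq) (m : ℤ) (hm : m ≤ 0) :
    (polyL (fracPoly f) : LaurentSeries Fq).coeff m = f.coeff m := by
  set N := (max 0 (-f.order)).toNat + 1 with hN
  have hj : m = -(((-m).toNat : ℕ) : ℤ) := by omega
  rw [hj, polyL_coeff, fracPoly_coeff]
  split
  · rfl
  · next h =>
    rw [eq_comm]
    apply HahnSeries.coeff_eq_zero_of_lt_order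
    omega

end PolyL

section AbsInfty
variable {Fq : Type*} [Field Fq] [Fintype Fq]

lemma absInfty_nonneg (f : LaurentSeries Fq) : 0 ≤ absInfty f := by
  unfold absInfty
  split
  · exact le_refl 0
  · positivity

lemma absInfty_le_of_coeff (f : LaurentSeries Fq) (n : ℤ)
    (h : ∀ k : ℤ, k < n → f.coeff k = 0) :
    absInfty f ≤ (Fintype.card Fq : ℝ) ^ (-n) := by
  unfold absInfty
  split
  · positivity
  · next hf =>
    have hq : (1:ℝ) ≤ (Fintype.card Fq : ℝ) := by exact_mod_cast Fintype.card_pos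
    apply zpow_le_zpow_right₀ hq
    have : n ≤ f.order := by
      by_contra hc
      exact (HahnSeries.coeff_order_eq_zero.not.mpr hf) (h _ (by omega))
    omega

end AbsInfty

section DegreeCond
variable {Fq : Type*} [Field Fq]

lemma bot_lt_coeN (n : ℕ) : (⊥ : WithBot ℕ) < (n : WithBot ℕ) := by
  exact_mod_cast WithBot.bot_lt_coe n

lemma degree_cond_iff (α : Polynomial Fq) (hα0 : α ≠ 0)
    (hα : Odd α.natDegree ∨ ¬ IsSquare α.leadingCoeff) (X : ℕ) (hX : α.natDegree ≤ X)
    (u v : Polynomial Fq) :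
    (u ^ 2 - v ^ 2 * α).degree ≤ (X : WithBot ℕ) ↔
      u ∈ degreeLT Fq (X/2 + 1) ∧ v ∈ degreeLT Fq ((X - α.natDegree)/2 + 1) := by
  set ℓ := α.natDegree
  rw [Polynomial.mem_degreeLT, Polynomial.mem_degreeLT]
  by_cases hu : u = 0
  · subst hu
    by_cases hv : v = 0
    · subst hv
      constructor
      · intro _
        constructor <;> · rw [Polynomial.degree_zero]; exact bot_lt_coeN _
      · intro _
        have : ((0:Polynomial Fq)^2 - 0^2*α) = 0 := by ring
        rw [this, Polynomial.degree_zero]; exact bot_le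
    · have hv2 : v^2 * α ≠ 0 := mul_ne_zero (pow_ne_zero _ hv) hα0
      have hdeg : (v^2*α).natDegree = 2 * v.natDegree + ℓ := by
        rw [Polynomial.natDegree_mul (pow_ne_zero _ hv) hα0, Polynomial.natDegree_pow]
      have he : ((0:Polynomial Fq)^2 - v^2*α) = -(v^2*α) := by ring
      rw [he, Polynomial.degree_neg,
        ← Polynomial.natDegree_le_iff_degree_le,
        ← Polynomial.natDegree_lt_iff_degree_lt hv, hdeg]
      constructor
      · intro h
        refine ⟨?_, by omega⟩
        rw [Polynomial.degree_zero]; exact bot_lt_coeN _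
      · rintro ⟨-, h⟩; omega
  · by_cases hv : v = 0
    · subst hv
      have hu2 : u^2 ≠ 0 := pow_ne_zero _ hu
      have he : (u^2 - (0:Polynomial Fq)^2*α) = u^2 := by ring
      rw [he, ← Polynomial.natDegree_le_iff_degree_le,
        ← Polynomial.natDegree_lt_iff_degree_lt hu, Polynomial.natDegree_pow]
      constructor
      · intro h
        refine ⟨by omega, ?_⟩
        rw [Polynomial.degree_zero]; exact bot_lt_coeN _
      · rintro ⟨h, -⟩; omega
    · have hu2 : u^2 ≠ 0 := pow_ne_zero _ hu
      have hv2 : v^2 * α ≠ 0 := mul_ne_zero (pow_ne_zero _ hv) hα0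
      have hdu : (u^2).natDegree = 2 * u.natDegree := by
        rw [Polynomial.natDegree_pow]
      have hdv : (v^2*α).natDegree = 2 * v.natDegree + ℓ := by
        rw [Polynomial.natDegree_mul (pow_ne_zero _ hv) hα0, Polynomial.natDegree_pow]
      have hDu : (u^2).degree = ((2 * u.natDegree : ℕ) : WithBot ℕ) := by
        rw [Polynomial.degree_eq_natDegree hu2, hdu]
      have hDv : (v^2*α).degree = ((2 * v.natDegree + ℓ : ℕ) : WithBot ℕ) := by
        rw [Polynomial.degree_eq_natDegree hv2, hdv]
      rw [← Polynomial.natDegree_lt_iff_degree_lt hu, ← Polynomial.natDegree_lt_iff_degree_lt hv]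
      rcases lt_trichotomy (2 * u.natDegree) (2 * v.natDegree + ℓ) with hlt | heq | hgt
      · rw [Polynomial.degree_sub_eq_right_of_degree_lt (by rw [hDu, hDv]; exact_mod_cast hlt),
          hDv, Nat.cast_le]
        constructor
        · intro h; exact ⟨by omega, by omega⟩
        · rintro ⟨-, h⟩; omega
      · have hcoef : (u^2 - v^2*α).coeff (2 * u.natDegree) ≠ 0 := by
          rw [Polynomial.coeff_sub]
          have h1 : (u^2).coeff (2 * u.natDegree) = u.leadingCoeff ^ 2 := by
            rw [← hdu, Polynomial.coeff_natDegree, Polynomial.leadingCoeff_pow]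
          have h2 : (v^2*α).coeff (2 * u.natDegree) = v.leadingCoeff ^ 2 * α.leadingCoeff := by
            rw [heq, ← hdv, Polynomial.coeff_natDegree, Polynomial.leadingCoeff_mul,
              Polynomial.leadingCoeff_pow]
          rw [h1, h2]
          intro hzero
          have hvlc : v.leadingCoeff ≠ 0 := Polynomial.leadingCoeff_ne_zero.mpr hv
          have hlc : α.leadingCoeff = (u.leadingCoeff / v.leadingCoeff)^2 := by
            field_simp
            linear_combination -hzero
          rcases hα with hodd | hnsq
          · obtain ⟨t, ht⟩ := hodd; omega
          · exact hnsq ⟨u.leadingCoeff / v.leadingCoeff, by rw [hlc, sq]⟩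
        have hdeg : (u^2 - v^2*α).degree = ((2*u.natDegree : ℕ) : WithBot ℕ) := by
          apply le_antisymm
          · refine le_trans (Polynomial.degree_sub_le _ _) ?_
            rw [hDu, hDv, ← heq, max_self]
          · exact Polynomial.le_degree_of_ne_zero hcoef
        rw [hdeg, Nat.cast_le]
        constructor
        · intro h; exact ⟨by omega, by omega⟩
        · rintro ⟨h, -⟩; omega
      · rw [Polynomial.degree_sub_eq_left_of_degree_lt (by rw [hDu, hDv]; exact_mod_cast hgt), hDu,
          Nat.cast_le]
        constructor
        · intro h; exact ⟨by omega, by omega⟩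
        · rintro ⟨h, -⟩; omega

end DegreeCond

section CharSum
variable (p : ℕ) [Fact p.Prime] {Fq : Type*} [Field Fq] [Fintype Fq] [Algebra (ZMod p) Fq]

noncomputable instance fintypeDegreeLT (n : ℕ) : Fintype (Polynomial.degreeLT Fq n) :=
  Fintype.ofEquiv _ (Polynomial.degreeLTEquiv Fq n).toEquiv.symm

lemma card_degreeLT (n : ℕ) :
    Fintype.card (Polynomial.degreeLT Fq n) = Fintype.card Fq ^ n := by
  rw [Fintype.card_congr (Polynomial.degreeLTEquiv Fq n).toEquiv]
  simp [Fintype.card_fun]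

lemma charSum_eq_zero (f : LaurentSeries Fq) (n : ℕ) (w₀ : Polynomial Fq)
    (hw : w₀ ∈ degreeLT Fq n) (hne : eChar p (f * polyL w₀) ≠ 1) :
    ∑ w : Polynomial.degreeLT Fq n, eChar p (f * polyL (w : Polynomial Fq)) = 0 := by
  set χ : Polynomial.degreeLT Fq n → ℂ :=
    fun w => eChar p (f * polyL (w : Polynomial Fq)) with hχ
  have hmul : ∀ w w' : Polynomial.degreeLT Fq n, χ (w + w') = χ w * χ w' := by
    intro w w'
    show eChar p (f * polyL ((w : Polynomial Fq) + (w' : Polynomial Fq))) = _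
    rw [map_add, mul_add, eChar_add]
  have key : χ ⟨w₀, hw⟩ * ∑ w, χ w = ∑ w, χ w := by
    rw [Finset.mul_sum]
    calc ∑ w, χ ⟨w₀, hw⟩ * χ w = ∑ w, χ (⟨w₀, hw⟩ + w) := by
          refine Finset.sum_congr rfl fun w _ => ?_
          rw [hmul]
      _ = ∑ w, χ w := Equiv.sum_comp (Equiv.addLeft (⟨w₀, hw⟩ : Polynomial.degreeLT Fq n)) χ
  have h2 : (χ ⟨w₀, hw⟩ - 1) * ∑ w, χ w = 0 := by
    rw [sub_mul, key, one_mul, sub_self]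
  rcases mul_eq_zero.mp h2 with h | h
  · exact absurd (by linear_combination h) hne
  · exact h

lemma exists_nontrivial [CharP Fq p] (f : LaurentSeries Fq) (n k : ℕ)
    (h1 : 1 ≤ k) (h2 : k ≤ n) (hc : f.coeff (k:ℤ) ≠ 0) :
    ∃ w₀ ∈ degreeLT Fq (n+1), eChar p (f * polyL w₀) ≠ 1 := by
  have hnd := (traceForm_nondegenerate (ZMod p) Fq).1 (f.coeff (k:ℤ))
  simp_rw [Algebra.traceForm_apply] at hnd
  have hcc : ∃ c : Fq, Algebra.trace (ZMod p) Fq (f.coeff (k:ℤ) * c) ≠ 0 := by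
    by_contra! hf
    exact hc (hnd hf)
  obtain ⟨c, hcc⟩ := hcc
  refine ⟨C c * X^(k-1), ?_, ?_⟩
  · rw [Polynomial.mem_degreeLT]
    refine lt_of_le_of_lt (Polynomial.degree_C_mul_X_pow_le _ _) ?_
    exact_mod_cast Nat.cast_lt.mpr (by omega : k - 1 < n + 1)
  · apply eChar_ne_one
    rw [mul_polyL_monomial_coeff_one]
    have : (1 + ((k-1:ℕ):ℤ)) = (k:ℤ) := by omega
    rwa [this]

end CharSum
open Classical in
/-- For `X ≥ ℓ = deg α` and `h = a + b√α ∈ K`, the sum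
`Σ(X,h) = ∑_{x ∈ 𝔸, deg(Norm x) ≤ X} e(Tr(h·x/(2√α)))` (whose summand, for
`x = u + v√α`, equals `e(a·v + b·u)`) satisfies `|Σ(X,h)| ≤ q^{X+2}` if
`N_T(h) ≤ q^{ℓ−X−1}` and `Σ(X,h) = 0` otherwise, where
`N_T(h) = inf_{(s,w) ∈ A²} max(|a+s|_∞², |b+w|_∞²·q^ℓ)` is the squared torus distance
of `h` in `K_∞/𝔸`. -/
theorem stmt_11 (p : ℕ) [Fact p.Prime] {Fq : Type*} [Field Fq] [Fintype Fq] [CharP Fq p]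
    [Algebra (ZMod p) Fq] (hq : Odd (Fintype.card Fq))
    (α : Polynomial Fq) (hsf : Squarefree α)
    (hα : Odd α.natDegree ∨ ¬ IsSquare α.leadingCoeff)
    (X : ℕ) (hX : α.natDegree ≤ X) (a b : RatFunc Fq) :
    let S : ℂ := ∑' x : {uv : Polynomial Fq × Polynomial Fq //
        (uv.1 ^ 2 - uv.2 ^ 2 * α).degree ≤ (X : WithBot ℕ)},
      eChar p (ratL a * polyL (x : Polynomial Fq × Polynomial Fq).2 +
               ratL b * polyL (x : Polynomial Fq × Polynomial Fq).1)
    let NT : ℝ := ⨅ c : Polynomial Fq × Polynomial Fq,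
      max ((absInfty (ratL a + polyL c.1)) ^ 2)
          ((absInfty (ratL b + polyL c.2)) ^ 2 * (Fintype.card Fq : ℝ) ^ α.natDegree)
    (NT ≤ (Fintype.card Fq : ℝ) ^ ((α.natDegree : ℤ) - X - 1) →
      ‖S‖ ≤ (Fintype.card Fq : ℝ) ^ (X + 2)) ∧
    (¬ NT ≤ (Fintype.card Fq : ℝ) ^ ((α.natDegree : ℤ) - X - 1) → S = 0) := by
  intro S NT
  have hα0 : α ≠ 0 := hsf.ne_zero
  have hq1 : (1:ℝ) ≤ (Fintype.card Fq : ℝ) := by exact_mod_cast Fintype.card_pos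
  have hiff : ∀ uv : Polynomial Fq × Polynomial Fq,
      (uv.1 ^ 2 - uv.2 ^ 2 * α).degree ≤ (X : WithBot ℕ) ↔
        uv.1 ∈ degreeLT Fq (X/2 + 1) ∧ uv.2 ∈ degreeLT Fq ((X - α.natDegree)/2 + 1) :=
    fun uv => degree_cond_iff α hα0 hα X hX uv.1 uv.2
  let E : {uv : Polynomial Fq × Polynomial Fq //
        (uv.1 ^ 2 - uv.2 ^ 2 * α).degree ≤ (X : WithBot ℕ)} ≃
      (Polynomial.degreeLT Fq (X/2 + 1)) × (Polynomial.degreeLT Fq ((X - α.natDegree)/2 + 1)) :=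
    { toFun := fun x => (⟨x.1.1, ((hiff x.1).mp x.2).1⟩, ⟨x.1.2, ((hiff x.1).mp x.2).2⟩)
      invFun := fun y => ⟨(y.1.1, y.2.1), (hiff _).mpr ⟨y.1.2, y.2.2⟩⟩
      left_inv := fun x => rfl
      right_inv := fun y => rfl }
  haveI : Fintype {uv : Polynomial Fq × Polynomial Fq //
      (uv.1 ^ 2 - uv.2 ^ 2 * α).degree ≤ (X : WithBot ℕ)} := Fintype.ofEquiv _ E.symm
  have hS : S = ∑ y : (Polynomial.degreeLT Fq (X/2 + 1)) ×
      (Polynomial.degreeLT Fq ((X - α.natDegree)/2 + 1)),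
      eChar p (ratL a * polyL (y.2 : Polynomial Fq) + ratL b * polyL (y.1 : Polynomial Fq)) := by
    show (∑' x : {uv : Polynomial Fq × Polynomial Fq //
        (uv.1 ^ 2 - uv.2 ^ 2 * α).degree ≤ (X : WithBot ℕ)},
      eChar p (ratL a * polyL (x : Polynomial Fq × Polynomial Fq).2 +
               ratL b * polyL (x : Polynomial Fq × Polynomial Fq).1)) = _
    rw [tsum_fintype]
    exact (Equiv.sum_comp E.symm _).symm
  have hfactor : S = (∑ w : Polynomial.degreeLT Fq (X/2 + 1),
        eChar p (ratL b * polyL (w : Polynomial Fq))) *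
      (∑ w : Polynomial.degreeLT Fq ((X - α.natDegree)/2 + 1),
        eChar p (ratL a * polyL (w : Polynomial Fq))) := by
    rw [hS, Fintype.sum_prod_type]
    simp_rw [eChar_add p]
    calc ∑ u : Polynomial.degreeLT Fq (X/2 + 1),
          ∑ v : Polynomial.degreeLT Fq ((X - α.natDegree)/2 + 1),
          eChar p (ratL a * polyL (v : Polynomial Fq)) *
            eChar p (ratL b * polyL (u : Polynomial Fq))
        = ∑ u : Polynomial.degreeLT Fq (X/2 + 1),
          (∑ v : Polynomial.degreeLT Fq ((X - α.natDegree)/2 + 1),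
            eChar p (ratL a * polyL (v : Polynomial Fq))) *
              eChar p (ratL b * polyL (u : Polynomial Fq)) := by
          exact Finset.sum_congr rfl fun u _ => (Finset.sum_mul _ _ _).symm
      _ = (∑ v : Polynomial.degreeLT Fq ((X - α.natDegree)/2 + 1),
            eChar p (ratL a * polyL (v : Polynomial Fq))) *
          (∑ u : Polynomial.degreeLT Fq (X/2 + 1),
            eChar p (ratL b * polyL (u : Polynomial Fq))) := by
          rw [← Finset.mul_sum]
      _ = _ := mul_comm _ _
  constructor
  · intro _
    rw [hS]
    calc ‖∑ y : (Polynomial.degreeLT Fq (X/2 + 1)) ×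
          (Polynomial.degreeLT Fq ((X - α.natDegree)/2 + 1)),
          eChar p (ratL a * polyL (y.2 : Polynomial Fq) + ratL b * polyL (y.1 : Polynomial Fq))‖
        ≤ ∑ y : (Polynomial.degreeLT Fq (X/2 + 1)) ×
          (Polynomial.degreeLT Fq ((X - α.natDegree)/2 + 1)),
          ‖eChar p (ratL a * polyL (y.2 : Polynomial Fq) +
            ratL b * polyL (y.1 : Polynomial Fq))‖ := norm_sum_le _ _
      _ = (Fintype.card ((Polynomial.degreeLT Fq (X/2 + 1)) ×
          (Polynomial.degreeLT Fq ((X - α.natDegree)/2 + 1))) : ℝ) := by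
          simp only [norm_eChar]
          rw [Finset.sum_const, Finset.card_univ, nsmul_eq_mul, mul_one]
      _ ≤ (Fintype.card Fq : ℝ) ^ (X + 2) := by
          rw [Fintype.card_prod, card_degreeLT, card_degreeLT]
          push_cast
          rw [← pow_add]
          exact pow_le_pow_right₀ hq1 (by omega)
  · intro hNT
    by_cases hgood : (∀ k:ℕ, 1 ≤ k → k ≤ (X - α.natDegree)/2 → (ratL a).coeff (k:ℤ) = 0) ∧
        (∀ k:ℕ, 1 ≤ k → k ≤ X/2 → (ratL b).coeff (k:ℤ) = 0)
    · exfalso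
      apply hNT
      obtain ⟨hga, hgb⟩ := hgood
      have hbdd : BddBelow (Set.range fun c : Polynomial Fq × Polynomial Fq =>
          max ((absInfty (ratL a + polyL c.1)) ^ 2)
            ((absInfty (ratL b + polyL c.2)) ^ 2 * (Fintype.card Fq : ℝ) ^ α.natDegree)) := by
        refine ⟨0, ?_⟩
        rintro x ⟨c, rfl⟩
        have h1 := absInfty_nonneg (ratL a + polyL c.1)
        exact le_max_of_le_left (by positivity)
      refine le_trans (ciInf_le hbdd (-(fracPoly (ratL a)), -(fracPoly (ratL b)))) ?_
      have hda : ∀ m : ℤ, m < ((X - α.natDegree)/2 : ℕ) + 1 →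
          (ratL a + polyL (-(fracPoly (ratL a)))).coeff m = 0 := by
        intro m hm
        rw [map_neg, HahnSeries.coeff_add, HahnSeries.coeff_neg]
        rcases le_or_gt m 0 with h0 | h0
        · rw [polyL_fracPoly_coeff _ _ h0]; ring
        · rw [polyL_coeff_pos _ _ h0, neg_zero, add_zero]
          have hmm : m = ((m.toNat : ℕ) : ℤ) := by omega
          rw [hmm]; exact hga m.toNat (by omega) (by omega)
      have hdb : ∀ m : ℤ, m < (X/2 : ℕ) + 1 →
          (ratL b + polyL (-(fracPoly (ratL b)))).coeff m = 0 := by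
        intro m hm
        rw [map_neg, HahnSeries.coeff_add, HahnSeries.coeff_neg]
        rcases le_or_gt m 0 with h0 | h0
        · rw [polyL_fracPoly_coeff _ _ h0]; ring
        · rw [polyL_coeff_pos _ _ h0, neg_zero, add_zero]
          have hmm : m = ((m.toNat : ℕ) : ℤ) := by omega
          rw [hmm]; exact hgb m.toNat (by omega) (by omega)
      have hA : absInfty (ratL a + polyL (-(fracPoly (ratL a)))) ≤
          (Fintype.card Fq : ℝ) ^ (-((((X - α.natDegree)/2 : ℕ) : ℤ) + 1)) :=
        absInfty_le_of_coeff _ _ hda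
      have hB : absInfty (ratL b + polyL (-(fracPoly (ratL b)))) ≤
          (Fintype.card Fq : ℝ) ^ (-(((X/2 : ℕ) : ℤ) + 1)) :=
        absInfty_le_of_coeff _ _ hdb
      have h0a := absInfty_nonneg (ratL a + polyL (-(fracPoly (ratL a))))
      have h0b := absInfty_nonneg (ratL b + polyL (-(fracPoly (ratL b))))
      apply max_le
      · calc (absInfty (ratL a + polyL (-(fracPoly (ratL a))))) ^ 2
            ≤ ((Fintype.card Fq : ℝ) ^ (-((((X - α.natDegree)/2 : ℕ) : ℤ) + 1))) ^ 2 :=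
              pow_le_pow_left₀ h0a hA 2
          _ = (Fintype.card Fq : ℝ) ^ ((-((((X - α.natDegree)/2 : ℕ) : ℤ) + 1)) * 2) := by
              rw [← zpow_natCast ((Fintype.card Fq : ℝ) ^
                (-((((X - α.natDegree)/2 : ℕ) : ℤ) + 1))) 2, ← zpow_mul]
              norm_num
          _ ≤ (Fintype.card Fq : ℝ) ^ ((α.natDegree : ℤ) - X - 1) :=
              zpow_le_zpow_right₀ hq1 (by omega)
      · calc (absInfty (ratL b + polyL (-(fracPoly (ratL b))))) ^ 2 *
              (Fintype.card Fq : ℝ) ^ α.natDegree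
            ≤ ((Fintype.card Fq : ℝ) ^ (-(((X/2 : ℕ) : ℤ) + 1))) ^ 2 *
              (Fintype.card Fq : ℝ) ^ α.natDegree := by
              have := pow_le_pow_left₀ h0b hB 2
              have hpos : (0:ℝ) ≤ (Fintype.card Fq : ℝ) ^ α.natDegree := by positivity
              exact mul_le_mul_of_nonneg_right this hpos
          _ = (Fintype.card Fq : ℝ) ^ ((-(((X/2 : ℕ) : ℤ) + 1)) * 2 + (α.natDegree : ℤ)) := by
              rw [← zpow_natCast ((Fintype.card Fq : ℝ) ^ (-(((X/2 : ℕ) : ℤ) + 1))) 2,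
                ← zpow_mul, ← zpow_natCast (Fintype.card Fq : ℝ) α.natDegree, ← zpow_add₀
                (by positivity : (Fintype.card Fq : ℝ) ≠ 0)]
              norm_num
          _ ≤ (Fintype.card Fq : ℝ) ^ ((α.natDegree : ℤ) - X - 1) :=
              zpow_le_zpow_right₀ hq1 (by omega)
    · rw [not_and_or] at hgood
      rw [hfactor]
      rcases hgood with hbad | hbad
      · push_neg at hbad
        obtain ⟨k, h1k, h2k, hk⟩ := hbad
        obtain ⟨w₀, hw₀, hne⟩ := exists_nontrivial p (ratL a) ((X - α.natDegree)/2) k h1k h2k hk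
        rw [charSum_eq_zero p (ratL a) ((X - α.natDegree)/2 + 1) w₀ hw₀ hne, mul_zero]
      · push_neg at hbad
        obtain ⟨k, h1k, h2k, hk⟩ := hbad
        obtain ⟨w₀, hw₀, hne⟩ := exists_nontrivial p (ratL b) (X/2) k h1k h2k hk
        rw [charSum_eq_zero p (ratL b) (X/2 + 1) w₀ hw₀ hne, zero_mul]
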